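/- Consistency of bounds under experience replay (part of Lemma 2): in the experience-replay LBQL algorithm with alpha_n(s,a) <= 1 for all n and (s,a), if L_0(s,a) <= U_0(s,a) for all (s,a) and |Q'_0(s,a)| <= rho, then L_n(s,a) <= U_n(s,a) for all iterations n and all state-action pairs (s,a). -/

import Mathlib

open MeasureTheory ProbabilityTheory Filter

namespace LBQL

noncomputable section

variable {S A W : Type*}

/-- The state-action trajectory generated by the transition function `f`, a deterministic
Markov policy `π`, the initial state-action pair `sa`, and the disturbance sequence `w`
(with the convention that `w t` plays the role of `w_{t+1}`, i.e.
`s_{t+1} = f (s_t, a_t, w t)` and `a_{t+1} = π (s_{t+1})`). -/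
def traj (f : S → A → W → S) (π : S → A) (sa : S × A) (w : ℕ → W) : ℕ → S × A
  | 0 => sa
  | t + 1 =>
      (f (traj f π sa w t).1 (traj f π sa w t).2 (w t),
        π (f (traj f π sa w t).1 (traj f π sa w t).2 (w t)))

/-- The discounted infinite-horizon action-value `Q^π(s,a)` of the deterministic Markov
policy `π`, defined as the expectation, over an i.i.d. disturbance sequence `wseq` on the
probability space `(Ω, μ)`, of the total discounted reward. -/
def Qpol {Ω : Type*} [MeasurableSpace Ω] (μ : Measure Ω) (wseq : ℕ → Ω → W)
    (γ : ℝ) (r : S → A → ℝ) (f : S → A → W → S) (π : S → A) (s : S) (a : A) : ℝ :=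
  ∫ ω, ∑' t, γ ^ t *
      r (traj f π (s, a) (fun i => wseq i ω) t).1
        (traj f π (s, a) (fun i => wseq i ω) t).2 ∂μ

/-- The optimal action-value function `Q*(s,a) = max_π Q^π(s,a)`. -/
def Qopt {Ω : Type*} [MeasurableSpace Ω] (μ : Measure Ω) (wseq : ℕ → Ω → W)
    (γ : ℝ) (r : S → A → ℝ) (f : S → A → W → S) (s : S) (a : A) : ℝ :=
  ⨆ π : S → A, Qpol μ wseq γ r f π s a

/-- Transition function of the absorption-time (absorbing-chain) formulation: the state
space is augmented with an absorbing state (`none`); the disturbance is a pair of a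
Bernoulli "survival" coin and an original disturbance, and the chain is killed (absorbed)
whenever the coin is `false`. -/
def habs (f : S → A → W → S) : Option S → A → Bool × W → Option S
  | some s, a, d => if d.1 then some (f s a d.2) else none
  | none, _, _ => none

/-- Reward of the absorbing chain: `0` at the absorbing state. -/
def rbar (r : S → A → ℝ) : Option S → A → ℝ
  | some s, a => r s a
  | none, _ => 0

/-- Extension of a function on `S × A` to the augmented state space, by `0` at the
absorbing state (the class `Q-cal`). -/
def ext0 (Q : S → A → ℝ) : Option S → A → ℝ
  | some s, a => Q s a
  | none, _ => 0

/-- Extension of a deterministic Markov policy to the augmented state space. -/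
def extPolicy [Nonempty A] (π : S → A) : Option S → A
  | some s => π s
  | none => Classical.arbitrary A

/-- The absorption time of a realized disturbance path of the absorbing chain: the first
time at which the chain is absorbed (equivalently, the first `n` such that one of the
survival coins among `d 0, …, d (n-1)` has failed). -/
def absTime (d : ℕ → Bool × W) : ℕ := sInf {n | ∃ i < n, (d i).1 = false}

/-- A canonical greedy policy for an action-value function `φ`. -/
def greedy {S' : Type*} [Fintype A] [Nonempty A] (φ : S' → A → ℝ) (s : S') : A :=
  Classical.choose (Finite.exists_max (φ s))

/-- The upper-bound inner dynamic program: `innerU h g w t m s a` is the (perfect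
information relaxation) value at time `t` with `m` periods remaining, per-period reward
`g` (reward minus penalty), realized disturbance path `w` and transition function `h`;
the terminal value is `0` and the continuation is maximized over actions. -/
def innerU {S' D : Type*} [Fintype A] [Nonempty A] (h : S' → A → D → S')
    (g : ℕ → S' → A → ℝ) (w : ℕ → D) : ℕ → ℕ → S' → A → ℝ
  | _, 0, _, _ => 0
  | t, m + 1, s, a => g t s a + ⨆ a' : A, innerU h g w (t + 1) m (h s a (w t)) a'

/-- The lower-bound inner dynamic program: as `innerU`, but the continuation action is
chosen by the policy `π`. -/
def innerL {S' D : Type*} (h : S' → A → D → S') (π : S' → A)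
    (g : ℕ → S' → A → ℝ) (w : ℕ → D) : ℕ → ℕ → S' → A → ℝ
  | _, 0, _, _ => 0
  | t, m + 1, s, a =>
      g t s a + innerL h π g w (t + 1) m (h s a (w t)) (π (h s a (w t)))

/-- The empirical (batch) penalty `ζ-hat_t^π(s, a, w_{t+1} | φ)`, where the conditional
expectation is estimated by the sample average over a batch of `K` disturbances. -/
def penB (f : S → A → W → S) (K : ℕ) (φ : Option S → A → ℝ) (π : Option S → A)
    (path : ℕ → Bool × W) (batch : ℕ → Option S → A → Fin K → Bool × W)
    (t : ℕ) (s : Option S) (a : A) : ℝ :=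
  φ (habs f s a (path t)) (π (habs f s a (path t))) -
    (K : ℝ)⁻¹ * ∑ k : Fin K,
      φ (habs f s a (batch t s a k)) (π (habs f s a (batch t s a k)))

/-- The exact penalty `ζ_t^π(s, a, w_{t+1} | φ)`, where the expectation is taken with
respect to the distribution `νa` of the absorbing-chain disturbance. -/
def penE [MeasurableSpace W] (f : S → A → W → S) (νa : Measure (Bool × W))
    (φ : Option S → A → ℝ) (π : Option S → A) (path : ℕ → Bool × W)
    (t : ℕ) (s : Option S) (a : A) : ℝ :=
  φ (habs f s a (path t)) (π (habs f s a (path t))) -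
    ∫ d, φ (habs f s a d) (π (habs f s a d)) ∂νa

/-- The experience-replay penalty `ζ-tilde_t^π(s, a, w_{t+1} | φ)`: the expectation is
taken with the `W`-component distributed according to `phat` and an independent
Bernoulli(γ) survival coin. -/
def penR [Fintype W] (f : S → A → W → S) (γ : ℝ) (phat : W → ℝ)
    (φ : Option S → A → ℝ) (π : Option S → A) (path : ℕ → Bool × W)
    (t : ℕ) (s : Option S) (a : A) : ℝ :=
  φ (habs f s a (path t)) (π (habs f s a (path t))) -
    ∑ x : W, phat x *
      (γ * φ (habs f s a (true, x)) (π (habs f s a (true, x))) +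
        (1 - γ) * φ (habs f s a (false, x)) (π (habs f s a (false, x))))

/-- Empirical distribution of the first `n+1` observed disturbances `wn 0, …, wn n`. -/
def empDist [DecidableEq W] (wn : ℕ → W) (n : ℕ) (x : W) : ℝ :=
  (((Finset.range (n + 1)).filter fun i => wn i = x).card : ℝ) / (n + 1)

/-- Finite geometric sum `∑_{i=0}^{m-1} γ^i`. -/
def Gsum (γ : ℝ) (m : ℕ) : ℝ := ∑ i ∈ Finset.range m, γ ^ i

/-- A realization of the LBQL algorithm: the visited states `sn`, chosen actions `an`,
observed disturbances `wn`, stepsizes, iterates `Q, Q', L, U`, the inner sample paths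
`path n` (of realized length `tau n`), the greedy policies `pol n` for `φ = Q_{n+1}` and
the realized penalty values `pen n` (common to the upper- and lower-bound inner
problems), together with the LBQL update equations. -/
structure Run [Fintype A] [Nonempty A]
    (f : S → A → W → S) (r : S → A → ℝ) (γ ρ : ℝ) where
  sn : ℕ → S
  an : ℕ → A
  wn : ℕ → W
  alpha : ℕ → S → A → ℝ
  beta : ℕ → S → A → ℝ
  Q : ℕ → S → A → ℝ
  Q' : ℕ → S → A → ℝ
  L : ℕ → S → A → ℝ
  U : ℕ → S → A → ℝ
  path : ℕ → ℕ → Bool × W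
  tau : ℕ → ℕ
  pol : ℕ → Option S → A
  pen : ℕ → ℕ → Option S → A → ℝ
  hs : ∀ n, sn (n + 1) = f (sn n) (an n) (wn n)
  halpha : ∀ n s a, 0 ≤ alpha n s a ∧ alpha n s a ≤ 1
  hbeta : ∀ n s a, 0 ≤ beta n s a ∧ beta n s a ≤ 1
  htau : ∀ n, tau n = absTime (path n)
  hpol : ∀ n s' a', ext0 (Q (n + 1)) s' a' ≤ ext0 (Q (n + 1)) s' (pol n s')
  hQ'0 : ∀ s a, Q' 0 s a = Q 0 s a
  hQon : ∀ n, Q (n + 1) (sn n) (an n) = Q' n (sn n) (an n) + alpha n (sn n) (an n) *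
      (r (sn n) (an n) + γ * (⨆ a' : A, Q' n (sn (n + 1)) a') - Q' n (sn n) (an n))
  hQoff : ∀ n s a, ¬(s = sn n ∧ a = an n) → Q (n + 1) s a = Q' n s a
  hUon : ∀ n, U (n + 1) (sn n) (an n) = max (-ρ) (U n (sn n) (an n) +
      beta n (sn n) (an n) *
        (innerU (habs f) (fun t s' a' => rbar r s' a' - pen n t s' a') (path n) 0 (tau n)
            (some (sn n)) (an n) -
          U n (sn n) (an n)))
  hUoff : ∀ n s a, ¬(s = sn n ∧ a = an n) → U (n + 1) s a = U n s a
  hLon : ∀ n, L (n + 1) (sn n) (an n) = min ρ (L n (sn n) (an n) +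
      beta n (sn n) (an n) *
        (innerL (habs f) (pol n) (fun t s' a' => rbar r s' a' - pen n t s' a') (path n) 0
            (tau n) (some (sn n)) (an n) -
          L n (sn n) (an n)))
  hLoff : ∀ n s a, ¬(s = sn n ∧ a = an n) → L (n + 1) s a = L n s a
  hQ'on : ∀ n, Q' (n + 1) (sn n) (an n) = max (L (n + 1) (sn n) (an n))
      (min (U (n + 1) (sn n) (an n)) (Q (n + 1) (sn n) (an n)))
  hQ'off : ∀ n s a, ¬(s = sn n ∧ a = an n) → Q' (n + 1) s a = Q (n + 1) s a


/-- Index type for the noise random variables of the idealized LBQL algorithm: the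
observed disturbances (indexed by the iteration `n`), the inner sample-path disturbances
(indexed by `(n, t)`), and the batch disturbances (indexed by
`(n, t, s, a, k)`, a fresh batch at each evaluation of the penalty). -/
abbrev NzIdx (S' A' : Type*) (K : ℕ) : Type _ :=
  ℕ ⊕ ((ℕ × ℕ) ⊕ (ℕ × ℕ × Option S' × A' × Fin K))

/-- Codomain of each noise variable: `W` for the observed disturbances, `Bool × W`
(survival coin together with a disturbance) for the absorbing-chain disturbances. -/
def NzTy (W' : Type*) {S' A' : Type*} {K : ℕ} : NzIdx S' A' K → Type _
  | .inl _ => W'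
  | .inr _ => Bool × W'

/-- The measurable-space structure on the codomain of each noise variable. -/
def nzms (W' : Type*) [MeasurableSpace W'] {S' A' : Type*} {K : ℕ} :
    ∀ j : NzIdx S' A' K, MeasurableSpace (NzTy W' j)
  | .inl _ => (inferInstance : MeasurableSpace W')
  | .inr _ => (inferInstance : MeasurableSpace (Bool × W'))

/-- The family of noise random variables, assembled from the observed disturbances `wn`,
the inner sample paths `path` and the batches `batch`. -/
def nzfun {Ω W' S' A' : Type*} {K : ℕ} (wn : ℕ → Ω → W')
    (path : ℕ → ℕ → Ω → Bool × W')
    (batch : ℕ → ℕ → Option S' → A' → Fin K → Ω → Bool × W') :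
    ∀ j : NzIdx S' A' K, Ω → NzTy W' j
  | .inl n => wn n
  | .inr (.inl (n, t)) => path n t
  | .inr (.inr (n, t, s, a, k)) => batch n t s a k

/-- The iteration (stage) at which a given noise variable is used. -/
def nzStage {S' A' : Type*} {K : ℕ} : NzIdx S' A' K → ℕ
  | .inl n => n
  | .inr (.inl (n, _)) => n
  | .inr (.inr (n, _, _, _, _)) => n

/-- Index type for the noise of the LBQL algorithm with exact penalties (no batches). -/
abbrev NzIdxE : Type := ℕ ⊕ (ℕ × ℕ)

def NzTyE (W' : Type*) : NzIdxE → Type _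
  | .inl _ => W'
  | .inr _ => Bool × W'

def nzmsE (W' : Type*) [MeasurableSpace W'] : ∀ j : NzIdxE, MeasurableSpace (NzTyE W' j)
  | .inl _ => (inferInstance : MeasurableSpace W')
  | .inr _ => (inferInstance : MeasurableSpace (Bool × W'))

def nzfunE {Ω W' : Type*} (wn : ℕ → Ω → W') (path : ℕ → ℕ → Ω → Bool × W') :
    ∀ j : NzIdxE, Ω → NzTyE W' j
  | .inl n => wn n
  | .inr (n, t) => path n t

def nzStageE : NzIdxE → ℕ
  | .inl n => n
  | .inr (n, _) => n

/-- Index type for the noise of the experience-replay LBQL algorithm: observed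
disturbances, the survival coins of the inner sample paths, and the uniformly random
buffer indices used to draw the inner sample paths from the replay buffer. -/
abbrev NzIdxR : Type := ℕ ⊕ ((ℕ × ℕ) ⊕ (ℕ × ℕ))

def NzTyR (W' : Type) : NzIdxR → Type
  | .inl _ => W'
  | .inr (.inl _) => Bool
  | .inr (.inr _) => ℕ

def nzmsR (W' : Type) [MeasurableSpace W'] : ∀ j : NzIdxR, MeasurableSpace (NzTyR W' j)
  | .inl _ => (inferInstance : MeasurableSpace W')
  | .inr (.inl _) => (inferInstance : MeasurableSpace Bool)
  | .inr (.inr _) => (inferInstance : MeasurableSpace ℕ)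

def nzfunR {Ω : Type*} {W' : Type} (wn : ℕ → Ω → W') (coin : ℕ → ℕ → Ω → Bool)
    (idx : ℕ → ℕ → Ω → ℕ) : ∀ j : NzIdxR, Ω → NzTyR W' j
  | .inl n => wn n
  | .inr (.inl (n, t)) => coin n t
  | .inr (.inr (n, t)) => idx n t

def nzStageR : NzIdxR → ℕ
  | .inl n => n
  | .inr (.inl (n, _)) => n
  | .inr (.inr (n, _)) => n

/-- `LbarGen γ M Ut n` is the lower envelope
`min { Ut (n-1) (1+γ), …, Ut 1 (1+γ+⋯+γ^{n-1}), -M (1+γ+⋯+γ^n) }`. -/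
def LbarGen (γ M : ℝ) (Ut : ℕ → ℝ) (n : ℕ) : ℝ :=
  (insert 0 (Finset.Ico 1 n)).inf' (Finset.insert_nonempty _ _)
    (fun j => if j = 0 then -M * Gsum γ (n + 1) else Ut j * Gsum γ (n - j + 1))

/-- `UbarGen γ M Lt n` is the upper envelope
`max { Lt (n-1) (1+γ), …, Lt 1 (1+γ+⋯+γ^{n-1}), M (1+γ+⋯+γ^n) }`. -/
def UbarGen (γ M : ℝ) (Lt : ℕ → ℝ) (n : ℕ) : ℝ :=
  (insert 0 (Finset.Ico 1 n)).sup' (Finset.insert_nonempty _ _)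
    (fun j => if j = 0 then M * Gsum γ (n + 1) else Lt j * Gsum γ (n - j + 1))

/-- As `LbarGen`, additionally including the term `Ut n` (note `Gsum γ 1 = 1`). -/
def Lbar'Gen (γ M : ℝ) (Ut : ℕ → ℝ) (n : ℕ) : ℝ :=
  (insert 0 (Finset.Icc 1 n)).inf' (Finset.insert_nonempty _ _)
    (fun j => if j = 0 then -M * Gsum γ (n + 1) else Ut j * Gsum γ (n - j + 1))

/-- As `UbarGen`, additionally including the term `Lt n`. -/
def Ubar'Gen (γ M : ℝ) (Lt : ℕ → ℝ) (n : ℕ) : ℝ :=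
  (insert 0 (Finset.Icc 1 n)).sup' (Finset.insert_nonempty _ _)
    (fun j => if j = 0 then M * Gsum γ (n + 1) else Lt j * Gsum γ (n - j + 1))

end

end LBQL

open LBQL

/-!
The policy `π` is one admissible choice of continuation action in the upper inner problem, so on
every sample path the lower inner value is at most the upper one. Since both bounds are updated at
the visited pair with the same stepsize `β ∈ [0, 1]`, each update is a convex combination of
ordered quantities, and the truncations at `ρ` and `-ρ` only move `L` down and `U` up.
-/

theorem LBQL.innerL_le_innerU {A S' D : Type*} [Fintype A] [Nonempty A]
    (h : S' → A → D → S') (π : S' → A) (g : ℕ → S' → A → ℝ) (w : ℕ → D) (m t : ℕ) (s : S')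
    (a : A) : innerL h π g w t m s a ≤ innerU h g w t m s a := by
  induction m generalizing t s a with
  | zero => simp [innerL, innerU]
  | succ m ih =>
    simp only [innerL, innerU]
    gcongr
    exact (ih _ _ _).trans (le_ciSup (Set.finite_range _).bddAbove _)

theorem add_mul_sub_le_add_mul_sub {l u x y β : ℝ} (hlu : l ≤ u) (hxy : x ≤ y) (hβ0 : 0 ≤ β)
    (hβ1 : β ≤ 1) : l + β * (x - l) ≤ u + β * (y - u) := by
  nlinarith [mul_le_mul_of_nonneg_left hxy hβ0, mul_le_mul_of_nonneg_left hlu (sub_nonneg.2 hβ1)]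

namespace LBQL.Run

variable {S A W : Type*} [Fintype A] [Nonempty A] {f : S → A → W → S} {r : S → A → ℝ} {γ ρ : ℝ}

theorem L_succ_le_U_succ (R : Run f r γ ρ) {n : ℕ} (hn : ∀ s a, R.L n s a ≤ R.U n s a)
    (s : S) (a : A) : R.L (n + 1) s a ≤ R.U (n + 1) s a := by
  by_cases hvisit : s = R.sn n ∧ a = R.an n
  · obtain ⟨rfl, rfl⟩ := hvisit
    rw [R.hLon n, R.hUon n]
    obtain ⟨hβ0, hβ1⟩ := R.hbeta n (R.sn n) (R.an n)
    exact (min_le_right _ _).trans <| (add_mul_sub_le_add_mul_sub (hn _ _)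
      (innerL_le_innerU _ _ _ _ _ _ _ _) hβ0 hβ1).trans (le_max_right _ _)
  · rw [R.hLoff n s a hvisit, R.hUoff n s a hvisit]
    exact hn s a

end LBQL.Run

theorem statement16_general
    {S A W : Type*} [Fintype A]
    [Nonempty A]
    (γ ρ : ℝ)
    (f : S → A → W → S) (r : S → A → ℝ)
    (R : Run f r γ ρ)
    (hLU0 : ∀ s a, R.L 0 s a ≤ R.U 0 s a) :
    ∀ n s a, R.L n s a ≤ R.U n s a := by
  intro n
  induction n with
  | zero => exact hLU0
  | succ n ih => exact R.L_succ_le_U_succ ih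

/-- **Lemma 2, consistency part: bounds under experience replay.**
In the experience-replay LBQL algorithm — where the penalties are computed with the
empirical distribution `p-hat_n` of the observed disturbances — with stepsizes
`α_n ≤ 1`, if `L_0 (s,a) ≤ U_0 (s,a)` for all `(s,a)` and `|Q'_0 (s,a)| ≤ ρ`, then
`L_n (s,a) ≤ U_n (s,a)` for all iterations `n` and all state-action pairs `(s,a)`. -/
theorem statement16
    {S A W : Type*} [Fintype S] [Fintype A] [Fintype W] [DecidableEq W]
    [Nonempty S] [Nonempty A] [Nonempty W]
    (γ Rmax ρ : ℝ) (hγ0 : 0 < γ) (hγ1 : γ < 1)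
    (f : S → A → W → S) (r : S → A → ℝ)
    (hr : ∀ s a, |r s a| ≤ Rmax) (hρ : ρ = Rmax / (1 - γ))
    (R : Run f r γ ρ)
    (hpen : ∀ n t s' a', R.pen n t s' a' =
      penR f γ (empDist R.wn n) (ext0 (R.Q (n + 1))) (R.pol n) (R.path n) t s' a')
    (hLU0 : ∀ s a, R.L 0 s a ≤ R.U 0 s a)
    (hQ'0 : ∀ s a, |R.Q' 0 s a| ≤ ρ) :
    ∀ n s a, R.L n s a ≤ R.U n s a :=
  statement16_general γ ρ f r R hLU0
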